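/- The Dirichlet-to-Neumann matrix Λ = A − B C⁻¹ Bᵗ of a network is symmetric and positive semidefinite, and its kernel consists exactly of the constant vectors on N: Λu = 0 if and only if u is constant. -/

import Mathlib

open Matrix BigOperators

/-- The Laplacian of a network given by a symmetric conductance function `c`
(zero on the diagonal and on non-edges): `Δ v v' = -c v v'` off the diagonal
and `Δ v v = ∑_{v'} c v v'` on the diagonal. -/
noncomputable def netLap {V : Type*} [Fintype V] [DecidableEq V] (c : V → V → ℝ) :
    Matrix V V ℝ :=
  Matrix.of fun v w => if v = w then ∑ u, c v u else -c v w

/-- The response matrix `L = -A + B C⁻¹ Bᵀ` of a network with node set `N`, where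
`Δ = [[A,B],[Bᵀ,C]]` is the block decomposition of the Laplacian with respect to the
nodes `N` and the internal vertices `V ∖ N`. -/
noncomputable def respMat {V : Type*} [Fintype V] [DecidableEq V]
    (c : V → V → ℝ) (N : Finset V) : Matrix {v : V // v ∈ N} {v : V // v ∈ N} ℝ :=
  -(netLap c).submatrix (Subtype.val : {v : V // v ∈ N} → V)
      (Subtype.val : {v : V // v ∈ N} → V)
    + (netLap c).submatrix (Subtype.val : {v : V // v ∈ N} → V)
        (Subtype.val : {v : V // v ∉ N} → V)
      * ((netLap c).submatrix (Subtype.val : {v : V // v ∉ N} → V)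
          (Subtype.val : {v : V // v ∉ N} → V))⁻¹
      * ((netLap c).submatrix (Subtype.val : {v : V // v ∈ N} → V)
          (Subtype.val : {v : V // v ∉ N} → V))ᵀ

/-!
Order the vertices as `N ⊕ (V ∖ N)`, so that `Λ` is the Schur complement of the interior block
`C` in the Laplacian `Δ = [[A, B], [Bᵀ, C]]`. The energy identity
`2 xᵀ Δ x = ∑ c_vw (x_v - x_w)²` shows that `Δ` is positive semidefinite and, by connectivity,
that its kernel consists of the constants. As `N ≠ ∅`, no nonzero vector supported on the
interior is constant, so `C` is positive definite; then `Λ` is positive semidefinite by the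
Schur complement criterion, and `Λ u = 0` exactly when `u` extends to a vector in the kernel of
`Δ` (its harmonic extension `-C⁻¹ Bᵀ u`), that is, when `u` is constant.
-/

theorem SimpleGraph.Reachable.eq_of_forall_adj {V α : Type*} {G : SimpleGraph V} {f : V → α}
    (hf : ∀ v w, G.Adj v w → f v = f w) {v w : V} (h : G.Reachable v w) : f v = f w := by
  obtain ⟨p⟩ := h
  induction p with
  | nil => rfl
  | cons hadj _ ih => exact (hf _ _ hadj).trans ih

namespace Matrix

variable {l m n R : Type*}

theorem IsHermitian.submatrix_sumCompl_eq_fromBlocks [Star R] {M : Matrix n n R}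
    (hM : M.IsHermitian) (p : n → Prop) [DecidablePred p] :
    M.submatrix (Equiv.sumCompl p) (Equiv.sumCompl p) =
      Matrix.fromBlocks (M.toBlock p p) (M.toBlock p (¬ p ·)) (M.toBlock p (¬ p ·))ᴴ
        (M.toBlock (¬ p ·) (¬ p ·)) := by
  ext (i | i) (j | j)
  exacts [rfl, rfl, (hM.apply _ _).symm, rfl]

theorem submatrix_equiv_mulVec_eq_zero_iff [Fintype m] [Fintype n] [NonUnitalNonAssocSemiring R]
    (M : Matrix n n R) (e : m ≃ n) (z : m → R) :
    M.submatrix e e *ᵥ z = 0 ↔ M *ᵥ (z ∘ e.symm) = 0 := by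
  rw [submatrix_mulVec_equiv]
  refine ⟨fun h => funext fun v => by simpa using congrFun h (e.symm v), fun h => by rw [h]; rfl⟩

theorem schur_mulVec_eq_zero_iff [Fintype m] [Fintype n] [DecidableEq n] [CommRing R]
    (A : Matrix l m R) (B : Matrix l n R) (C : Matrix n m R) (D : Matrix n n R) [Invertible D]
    (u : m → R) :
    (A - B * D⁻¹ * C) *ᵥ u = 0 ↔ ∃ y, fromBlocks A B C D *ᵥ Sum.elim u y = 0 := by
  simp only [fromBlocks_mulVec, Sum.elim_comp_inl, Sum.elim_comp_inr, ← Sum.elim_zero_zero,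
    Sum.elim_eq_iff]
  constructor
  · intro hu
    refine ⟨-(D⁻¹ *ᵥ C *ᵥ u), ?_, ?_⟩
    · rw [← hu, mulVec_neg, mulVec_mulVec, mulVec_mulVec, sub_mulVec, sub_eq_add_neg]
    · rw [mulVec_neg, mulVec_mulVec, mul_inv_of_invertible D, one_mulVec, add_neg_cancel]
  · rintro ⟨y, hboundary, hinterior⟩
    have hy : y = -(D⁻¹ *ᵥ C *ᵥ u) := by
      rw [eq_neg_iff_add_eq_zero, ← one_mulVec y, ← inv_mul_of_invertible D, ← mulVec_mulVec,
        ← mulVec_add, add_comm, hinterior, mulVec_zero]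
    rw [← hboundary, hy, mulVec_neg, mulVec_mulVec, mulVec_mulVec, sub_mulVec, sub_eq_add_neg]

open scoped ComplexOrder in
theorem posDef_of_fromBlocks {𝕜 : Type*} [RCLike 𝕜] [Fintype m] [Fintype n]
    {A : Matrix m m 𝕜} {B : Matrix m n 𝕜} {D : Matrix n n 𝕜}
    (h : (fromBlocks A B Bᴴ D).PosSemidef)
    (hker : ∀ y, fromBlocks A B Bᴴ D *ᵥ Sum.elim 0 y = 0 → y = 0) : D.PosDef := by
  have hD : D.PosSemidef := h.submatrix Sum.inr
  have hquad : ∀ y, star (Sum.elim 0 y) ⬝ᵥ (fromBlocks A B Bᴴ D *ᵥ Sum.elim 0 y)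
      = star y ⬝ᵥ (D *ᵥ y) := by
    intro y
    simp [fromBlocks_mulVec, Function.star_sumElim, sumElim_dotProduct_sumElim]
  refine PosDef.of_dotProduct_mulVec_pos hD.isHermitian fun y hy => ?_
  refine (hD.dotProduct_mulVec_nonneg y).lt_of_ne fun h0 => hy (hker y ?_)
  rw [← h.dotProduct_mulVec_zero_iff, hquad, h0]

end Matrix

section Network

variable {V : Type*} [Fintype V] [DecidableEq V] {c : V → V → ℝ}

theorem netLap_isHermitian (hsymm : ∀ v w, c v w = c w v) : (netLap c).IsHermitian := by
  refine isHermitian_iff_isSymm.2 (IsSymm.ext fun v w => ?_)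
  by_cases h : v = w
  · subst h; rfl
  · simp [netLap, h, Ne.symm h, hsymm v w]

theorem netLap_mulVec_apply (hdiag : ∀ v, c v v = 0) (x : V → ℝ) (v : V) :
    (netLap c *ᵥ x) v = ∑ w, c v w * (x v - x w) := by
  have hentry : ∀ w, netLap c v w * x w
      = (if v = w then (∑ u, c v u) * x v else 0) - c v w * x w := by
    intro w
    by_cases h : v = w
    · subst h; simp [netLap, hdiag v]
    · simp [netLap, h]
  simp only [mulVec, dotProduct, hentry, Finset.sum_sub_distrib, Finset.sum_ite_eq,
    Finset.mem_univ, if_true, mul_sub, ← Finset.sum_mul]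

theorem two_mul_dotProduct_netLap_mulVec (hsymm : ∀ v w, c v w = c w v)
    (hdiag : ∀ v, c v v = 0) (x : V → ℝ) :
    2 * (x ⬝ᵥ (netLap c *ᵥ x)) = ∑ v, ∑ w, c v w * (x v - x w) ^ 2 := by
  have hdot : x ⬝ᵥ (netLap c *ᵥ x) = ∑ v, ∑ w, c v w * (x v * (x v - x w)) := by
    simp only [dotProduct, netLap_mulVec_apply hdiag, Finset.mul_sum]
    exact Finset.sum_congr rfl fun v _ => Finset.sum_congr rfl fun w _ => by ring
  have hswap : ∑ v, ∑ w, c v w * (x v * (x v - x w))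
      = ∑ v, ∑ w, c v w * (x w * (x w - x v)) := by
    rw [Finset.sum_comm]
    simp only [hsymm]
  rw [two_mul, hdot]
  nth_rewrite 2 [hswap]
  simp only [← Finset.sum_add_distrib]
  exact Finset.sum_congr rfl fun v _ => Finset.sum_congr rfl fun w _ => by ring

theorem netLap_posSemidef (hsymm : ∀ v w, c v w = c w v) (hnonneg : ∀ v w, 0 ≤ c v w)
    (hdiag : ∀ v, c v v = 0) : (netLap c).PosSemidef := by
  refine PosSemidef.of_dotProduct_mulVec_nonneg (netLap_isHermitian hsymm) fun x => ?_
  have henergy := two_mul_dotProduct_netLap_mulVec hsymm hdiag x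
  have henergy_nonneg : 0 ≤ ∑ v, ∑ w, c v w * (x v - x w) ^ 2 :=
    Finset.sum_nonneg fun v _ => Finset.sum_nonneg fun w _ => mul_nonneg (hnonneg v w) (sq_nonneg _)
  rw [star_trivial]
  linarith

theorem netLap_mulVec_eq_zero_iff (hsymm : ∀ v w, c v w = c w v)
    (hnonneg : ∀ v w, 0 ≤ c v w) (hdiag : ∀ v, c v v = 0)
    (hconn : (SimpleGraph.fromRel fun v w : V => c v w ≠ 0).Connected) (x : V → ℝ) :
    netLap c *ᵥ x = 0 ↔ ∃ k, x = fun _ => k := by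
  refine ⟨fun hx => ?_, fun ⟨k, hk⟩ => funext fun v => by simp [hk, netLap_mulVec_apply hdiag]⟩
  have hterm_nonneg : ∀ v w, 0 ≤ c v w * (x v - x w) ^ 2 := fun v w =>
    mul_nonneg (hnonneg v w) (sq_nonneg _)
  have henergy : ∑ v, ∑ w, c v w * (x v - x w) ^ 2 = 0 := by
    rw [← two_mul_dotProduct_netLap_mulVec hsymm hdiag, hx, dotProduct_zero, mul_zero]
  have hterm : ∀ v w, c v w * (x v - x w) ^ 2 = 0 := fun v w =>
    (Finset.sum_eq_zero_iff_of_nonneg fun w _ => hterm_nonneg v w).1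
      ((Finset.sum_eq_zero_iff_of_nonneg fun v _ =>
        Finset.sum_nonneg fun w _ => hterm_nonneg v w).1 henergy v (Finset.mem_univ v))
      w (Finset.mem_univ w)
  have hedge : ∀ v w, c v w ≠ 0 → x v = x w := fun v w hc => by
    simpa [hc, sub_eq_zero] using hterm v w
  have hadj : ∀ v w, (SimpleGraph.fromRel fun v w : V => c v w ≠ 0).Adj v w → x v = x w := by
    rintro v w ⟨-, hvw | hwv⟩
    · exact hedge v w hvw
    · exact (hedge w v hwv).symm
  obtain ⟨v₀⟩ := hconn.nonempty
  exact ⟨x v₀, funext fun v => (hconn.preconnected v v₀).eq_of_forall_adj hadj⟩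

end Network

/-- The Dirichlet-to-Neumann matrix `Λ = A - B C⁻¹ Bᵀ` of a network is symmetric and
positive semidefinite, and its kernel consists exactly of the constant vectors. -/
theorem dirichlet_to_neumann_psd {V : Type*} [Fintype V] [DecidableEq V]
    (c : V → V → ℝ)
    (hsymm : ∀ v w, c v w = c w v)
    (hnonneg : ∀ v w, 0 ≤ c v w)
    (hdiag : ∀ v, c v v = 0)
    (hconn : (SimpleGraph.fromRel fun v w : V => c v w ≠ 0).Connected)
    (N : Finset V) (hN : N.Nonempty) :
    (-(respMat c N)).IsSymm ∧ (-(respMat c N)).PosSemidef ∧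
      ∀ u : {v : V // v ∈ N} → ℝ,
        (-(respMat c N)) *ᵥ u = 0 ↔ ∃ k : ℝ, ∀ i, u i = k := by
  set A := (netLap c).toBlock (· ∈ N) (· ∈ N)
  set B := (netLap c).toBlock (· ∈ N) (· ∉ N)
  set C := (netLap c).toBlock (· ∉ N) (· ∉ N)
  set e := Equiv.sumCompl (· ∈ N)
  have hΔ := netLap_posSemidef hsymm hnonneg hdiag
  have hblocks : (netLap c).submatrix e e = fromBlocks A B Bᴴ C :=
    hΔ.isHermitian.submatrix_sumCompl_eq_fromBlocks _
  have hpsd : (fromBlocks A B Bᴴ C).PosSemidef := hblocks ▸ hΔ.submatrix e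
  have hker : ∀ z, fromBlocks A B Bᴴ C *ᵥ z = 0 ↔ ∃ k, z = fun _ => k := fun z => by
    rw [← hblocks, submatrix_equiv_mulVec_eq_zero_iff,
      netLap_mulVec_eq_zero_iff hsymm hnonneg hdiag hconn]
    simp only [Equiv.comp_symm_eq]
    rfl
  have hC : C.PosDef := posDef_of_fromBlocks hpsd fun y hy => by
    obtain ⟨k, hk⟩ := (hker _).1 hy
    obtain ⟨n₀, hn₀⟩ := hN
    exact funext fun i => (congrFun hk (Sum.inr i)).trans (congrFun hk (Sum.inl ⟨n₀, hn₀⟩)).symm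
  have : Invertible C := hC.isUnit.invertible
  have hΛ : -(respMat c N) = A - B * C⁻¹ * Bᴴ := by
    rw [conjTranspose_eq_transpose_of_trivial, respMat, neg_add, neg_neg, ← sub_eq_add_neg]
    rfl
  have hΛpsd : (-(respMat c N)).PosSemidef := hΛ ▸ (PosDef.fromBlocks₂₂ A B hC).1 hpsd
  refine ⟨isHermitian_iff_isSymm.1 hΛpsd.isHermitian, hΛpsd, fun u => ?_⟩
  rw [hΛ, schur_mulVec_eq_zero_iff]
  simp only [hker]
  constructor
  · rintro ⟨y, k, hk⟩
    exact ⟨k, fun i => congrFun hk (Sum.inl i)⟩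
  · rintro ⟨k, hk⟩
    exact ⟨fun _ => k, k, funext (Sum.rec hk fun _ => rfl)⟩
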